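/- Let 0 < p ≤ 1, r = 2(1/p − 1/2), and let π be a permutation of dyadic intervals with CC_p(π(B)) ≤ M·CC_p(B) for all B ⊆ D. Fix D(I) ⊆ D with (D(I))* ⊆ I and K > 0, and let S(I) = { J ∈ D(I) : |π(J)|^r / Σ_{L∈max π(D(I))} |L|^r ≥ K(|J|/|I|)^r }. Then Σ_{J∈max S(I)} (|J|/|I|)^r ≤ M/K. -/

import Mathlib

open MeasureTheory ENNReal

/-- A dyadic subinterval of `[0,1]`: `[k/2^n, (k+1)/2^n)`. -/
structure DyadicI where
  n : ℕ
  k : ℕ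
  hk : k < 2 ^ n

namespace DyadicI

/-- The underlying set of a dyadic interval. -/
noncomputable def toSet (I : DyadicI) : Set ℝ :=
  Set.Ico ((I.k : ℝ) / 2 ^ I.n) ((I.k + 1 : ℝ) / 2 ^ I.n)

/-- The length `|I| = 2^{-n}`. -/
noncomputable def len (I : DyadicI) : ℝ≥0∞ := (2 ^ I.n : ℝ≥0∞)⁻¹

/-- Containment of dyadic intervals. -/
def le (J I : DyadicI) : Prop := J.toSet ⊆ I.toSet

/-- The measure of the pointset covered by a collection of dyadic intervals. -/
noncomputable def star (B : Set DyadicI) : ℝ≥0∞ :=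
  volume (⋃ I ∈ B, I.toSet)

/-- The Carleson constant of a collection of dyadic intervals. -/
noncomputable def carleson (B : Set DyadicI) : ℝ≥0∞ :=
  ⨆ I : DyadicI, (len I)⁻¹ * ∑' J : {J : DyadicI // J ∈ B ∧ le J I}, len (J : DyadicI)

/-- Maximal intervals of a collection. -/
def maxB (B : Set DyadicI) : Set DyadicI :=
  {I | I ∈ B ∧ ∀ J ∈ B, le I J → J = I}

/-- Squared dyadic BMO norm of a coefficient family, sup over collections. -/
noncomputable def bmoSq (x : DyadicI → ℝ) : ℝ≥0∞ :=
  ⨆ B : Set DyadicI,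
    (star B)⁻¹ * ∑' I : B, ENNReal.ofReal (x I ^ 2) * len (I : DyadicI)

/-- Squared dyadic BMO norm of a coefficient family, sup over dyadic intervals. -/
noncomputable def bmoSq' (x : DyadicI → ℝ) : ℝ≥0∞ :=
  ⨆ I : DyadicI,
    (len I)⁻¹ * ∑' J : {J : DyadicI // le J I}, ENNReal.ofReal (x J ^ 2) * len (J : DyadicI)

end DyadicI

open DyadicI

namespace DyadicI

/-- The Carleson `p`-constant of a collection, with exponent `r = 2(1/p - 1/2)`:
`sup_{I ∈ B} |I|^{-r} ∑_{J ∈ B, J ⊆ I} |J|^r`. -/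
noncomputable def carlesonP (r : ℝ) (B : Set DyadicI) : ℝ≥0∞ :=
  ⨆ I : B, (len (I : DyadicI) ^ r)⁻¹ *
    ∑' J : {J : DyadicI // J ∈ B ∧ le J (I : DyadicI)}, len (J : DyadicI) ^ r

/-- Squared `Λ_{(1/p-1)}` norm of a coefficient family, with exponent
`r = 2(1/p - 1/2)`. -/
noncomputable def lambdaSq (r : ℝ) (x : DyadicI → ℝ) : ℝ≥0∞ :=
  ⨆ I : DyadicI, (len I ^ r)⁻¹ *
    ∑' J : {J : DyadicI // le J I}, ENNReal.ofReal (x J ^ 2) * len (J : DyadicI) ^ r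

end DyadicI
namespace DyadicI

lemma tp_pos (n : ℕ) : (0:ℝ) < 2 ^ n := by positivity

lemma lt_aux (J : DyadicI) : (J.k : ℝ) / 2 ^ J.n < (J.k + 1 : ℝ) / 2 ^ J.n := by
  have h := tp_pos J.n
  rw [div_lt_div_iff₀ h h]
  nlinarith

lemma ext' {J I : DyadicI} (hn : J.n = I.n) (hk : J.k = I.k) : J = I := by
  cases J; cases I; simp_all

lemma le_rfl' (J : DyadicI) : le J J := subset_rfl

lemma le_trans' {a b c : DyadicI} (h1 : le a b) (h2 : le b c) : le a c :=
  Set.Subset.trans h1 h2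

lemma le_n_mono {J I : DyadicI} (h : le J I) : I.n ≤ J.n := by
  obtain ⟨h1, h2⟩ := (Set.Ico_subset_Ico_iff (lt_aux J)).1 h
  have hlen : (1:ℝ) / 2 ^ J.n ≤ 1 / 2 ^ I.n := by
    have e1 : ((J.k:ℝ) + 1) / 2 ^ J.n - (J.k:ℝ) / 2 ^ J.n = 1 / 2 ^ J.n := by
      field_simp
      ring
    have e2 : ((I.k:ℝ) + 1) / 2 ^ I.n - (I.k:ℝ) / 2 ^ I.n = 1 / 2 ^ I.n := by
      field_simp
      ring
    linarith
  have : (2:ℝ) ^ I.n ≤ 2 ^ J.n := by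
    rw [div_le_div_iff₀ (tp_pos J.n) (tp_pos I.n)] at hlen
    linarith
  exact_mod_cast (pow_le_pow_iff_right₀ (by norm_num : (1:ℝ) < 2)).1 this

lemma eq_of_le_of_n_le {J I : DyadicI} (h : le J I) (hn : J.n ≤ I.n) : J = I := by
  have hn' : I.n = J.n := Nat.le_antisymm (le_n_mono h) hn
  obtain ⟨h1, h2⟩ := (Set.Ico_subset_Ico_iff (lt_aux J)).1 h
  refine ext' hn'.symm ?_
  rw [hn'] at h1 h2
  have hp := tp_pos J.n
  have a1 : (I.k : ℝ) ≤ J.k := by rw [div_le_div_iff₀ hp hp] at h1; nlinarith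
  have a2 : (J.k : ℝ) ≤ I.k := by rw [div_le_div_iff₀ hp hp] at h2; nlinarith
  exact_mod_cast le_antisymm a2 a1

lemma le_of_mem_of_n_le {J I : DyadicI} {x : ℝ} (hxJ : x ∈ toSet J) (hxI : x ∈ toSet I)
    (hn : I.n ≤ J.n) : le J I := by
  obtain ⟨hJ1, hJ2⟩ := hxJ
  obtain ⟨hI1, hI2⟩ := hxI
  set d := J.n - I.n with hd
  have hpow : (2:ℝ) ^ J.n = 2 ^ I.n * 2 ^ d := by
    rw [← pow_add]; congr 1; omega
  have hpJ := tp_pos J.n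
  have hpI := tp_pos I.n
  have hpd := tp_pos d
  -- u = x * 2^J.n
  have hu1 : (J.k : ℝ) ≤ x * 2 ^ J.n := by
    rw [div_le_iff₀ hpJ] at hJ1; linarith
  have hu2 : x * 2 ^ J.n < (J.k : ℝ) + 1 := by
    rw [lt_div_iff₀ hpJ] at hJ2; linarith
  have hv1 : (I.k : ℝ) * 2 ^ d ≤ x * 2 ^ J.n := by
    rw [div_le_iff₀ hpI] at hI1; nlinarith
  have hv2 : x * 2 ^ J.n < ((I.k : ℝ) + 1) * 2 ^ d := by
    rw [lt_div_iff₀ hpI] at hI2; nlinarith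
  have hnat1 : I.k * 2 ^ d ≤ J.k := by
    have : (I.k * 2 ^ d : ℝ) < J.k + 1 := by push_cast; linarith
    have := (Nat.cast_lt (α := ℝ)).1 (by push_cast; exact this : ((I.k * 2 ^ d : ℕ) : ℝ) < ((J.k + 1 : ℕ) : ℝ))
    omega
  have hnat2 : J.k + 1 ≤ (I.k + 1) * 2 ^ d := by
    have : (J.k : ℝ) < (I.k + 1) * 2 ^ d := by linarith
    have := (Nat.cast_lt (α := ℝ)).1 (by push_cast; exact this : ((J.k : ℕ) : ℝ) < (((I.k + 1) * 2 ^ d : ℕ) : ℝ))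
    omega
  apply Set.Ico_subset_Ico
  · rw [div_le_div_iff₀ hpI hpJ]
    have : ((I.k * 2 ^ d : ℕ) : ℝ) ≤ (J.k : ℝ) := by exact_mod_cast hnat1
    push_cast at this
    nlinarith
  · rw [div_le_div_iff₀ hpJ hpI]
    have : ((J.k + 1 : ℕ) : ℝ) ≤ (((I.k + 1) * 2 ^ d : ℕ) : ℝ) := by exact_mod_cast hnat2
    push_cast at this
    nlinarith

lemma le_or_le_of_not_disjoint {J I : DyadicI} (h : ¬ Disjoint (toSet J) (toSet I)) :
    le J I ∨ le I J := by
  rw [Set.not_disjoint_iff] at h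
  obtain ⟨x, hx1, hx2⟩ := h
  rcases le_total I.n J.n with h' | h'
  · exact Or.inl (le_of_mem_of_n_le hx1 hx2 h')
  · exact Or.inr (le_of_mem_of_n_le hx2 hx1 h')

lemma maxB_disjoint {B : Set DyadicI} {J1 J2 : DyadicI} (h1 : J1 ∈ maxB B) (h2 : J2 ∈ maxB B)
    (hne : J1 ≠ J2) : Disjoint (toSet J1) (toSet J2) := by
  by_contra h
  rcases le_or_le_of_not_disjoint h with hle | hle
  · exact hne (h1.2 J2 h2.1 hle).symm
  · exact hne (h2.2 J1 h1.1 hle)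

lemma exists_le_maxB {B : Set DyadicI} {J : DyadicI} (hJ : J ∈ B) :
    ∃ N ∈ maxB B, le J N := by
  classical
  have hex : ∃ m, ∃ L ∈ B, le J L ∧ L.n = m := ⟨J.n, J, hJ, le_rfl' J, rfl⟩
  obtain ⟨L, hLB, hJL, hLn⟩ := Nat.find_spec hex
  refine ⟨L, ⟨hLB, ?_⟩, hJL⟩
  intro L' hL' hLL'
  have hmin : Nat.find hex ≤ L'.n := Nat.find_min' hex ⟨L', hL', le_trans' hJL hLL', rfl⟩
  have : L.n ≤ L'.n := by omega
  exact (eq_of_le_of_n_le hLL' this).symm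

lemma volume_toSet (I : DyadicI) : volume (toSet I) = len I := by
  rw [toSet, Real.volume_Ico, len]
  have h : (I.k + 1 : ℝ) / 2 ^ I.n - (I.k : ℝ) / 2 ^ I.n = ((2:ℝ) ^ I.n)⁻¹ := by
    field_simp
    ring
  rw [h, ENNReal.ofReal_inv_of_pos (tp_pos I.n)]
  congr 1
  rw [ENNReal.ofReal_pow (by norm_num : (0:ℝ) ≤ 2)]
  norm_num

lemma len_ne_zero (I : DyadicI) : len I ≠ 0 := by
  simp [len, ENNReal.inv_ne_zero, ENNReal.pow_ne_top]

lemma len_ne_top (I : DyadicI) : len I ≠ ⊤ := by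
  simp [len, pow_ne_zero]

lemma len_rpow_ne_zero (I : DyadicI) (r : ℝ) : len I ^ r ≠ 0 := by
  simp [ENNReal.rpow_eq_zero_iff, len_ne_zero I, len_ne_top I]

lemma len_rpow_ne_top (I : DyadicI) (r : ℝ) : len I ^ r ≠ ⊤ := by
  simp [ENNReal.rpow_eq_top_iff, len_ne_zero I, len_ne_top I]

lemma len_mono {J I : DyadicI} (h : le J I) : len J ≤ len I := by
  rw [len, len]
  apply ENNReal.inv_le_inv.2
  apply pow_le_pow_right₀ (by norm_num : (1:ℝ≥0∞) ≤ 2) (le_n_mono h)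

end DyadicI
namespace DyadicI

instance : Countable DyadicI :=
  Function.Injective.countable (f := fun I : DyadicI => (I.n, I.k))
    (by intro a b h; cases a; cases b; simp_all)

/-- Lemma C: sum of `len ^ r` over a pairwise disjoint collection under `L`. -/
lemma disjoint_sum_le {r : ℝ} (hr : 1 ≤ r) {C : Set DyadicI} {L : DyadicI}
    (hsub : ∀ N ∈ C, le N L)
    (hdisj : ∀ N1 ∈ C, ∀ N2 ∈ C, N1 ≠ N2 → Disjoint (toSet N1) (toSet N2)) :
    ∑' N : C, len (N : DyadicI) ^ r ≤ len L ^ r := by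
  have key : ∑' N : C, len (N : DyadicI) ≤ len L := by
    calc ∑' N : C, len (N : DyadicI) = ∑' N : C, volume (toSet (N : DyadicI)) :=
          tsum_congr fun N => (volume_toSet _).symm
      _ = volume (⋃ N : C, toSet (N : DyadicI)) := by
          refine (measure_iUnion ?_ fun N => measurableSet_Ico).symm
          intro N1 N2 hne
          exact hdisj N1 N1.2 N2 N2.2 (fun h => hne (Subtype.ext h))
      _ ≤ volume (toSet L) := measure_mono (Set.iUnion_subset fun N => hsub N N.2)
      _ = len L := volume_toSet L
  have hterm : ∀ N : C, len (N : DyadicI) ^ r ≤ len (N : DyadicI) * len L ^ (r - 1) := by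
    intro N
    have h1 : len (N : DyadicI) ^ r
        = len (N : DyadicI) ^ (1 : ℝ) * len (N : DyadicI) ^ (r - 1) := by
      rw [← ENNReal.rpow_add _ _ (len_ne_zero _) (len_ne_top _)]
      norm_num
    rw [h1, ENNReal.rpow_one]
    exact mul_le_mul_right (ENNReal.rpow_le_rpow (len_mono (hsub _ N.2)) (by linarith)) _
  calc ∑' N : C, len (N : DyadicI) ^ r
      ≤ ∑' N : C, len (N : DyadicI) * len L ^ (r - 1) :=
        Summable.tsum_le_tsum hterm ENNReal.summable ENNReal.summable
    _ = (∑' N : C, len (N : DyadicI)) * len L ^ (r - 1) := ENNReal.tsum_mul_right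
    _ ≤ len L * len L ^ (r - 1) := mul_le_mul_left key _
    _ = len L ^ r := by
        have h2 : len L ^ r = len L ^ (1 : ℝ) * len L ^ (r - 1) := by
          rw [← ENNReal.rpow_add _ _ (len_ne_zero _) (len_ne_top _)]
          norm_num
        rw [h2, ENNReal.rpow_one]

/-- Lemma A: covering decomposition of a sum. -/
lemma tsum_le_of_cover {B C : Set DyadicI} (f : DyadicI → ℝ≥0∞)
    (h : ∀ J ∈ B, ∃ L ∈ C, le J L) :
    ∑' J : B, f J ≤ ∑' L : C, ∑' J : {J : DyadicI // J ∈ B ∧ le J (L : DyadicI)}, f J := by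
  classical
  have hg : ∀ J : B, ∃ L : C, le (J : DyadicI) (L : DyadicI) := by
    intro J
    obtain ⟨L, hL, hle⟩ := h J J.2
    exact ⟨⟨L, hL⟩, hle⟩
  choose g hgle using hg
  calc ∑' J : B, f J = ∑' q : (Σ L : C, {J : B // g J = L}), f ((q.2 : B) : DyadicI) :=
        (((Equiv.sigmaFiberEquiv g).tsum_eq (fun J : B => f J)).symm.trans
          (tsum_congr fun q => rfl))
    _ = ∑' L : C, ∑' J : {J : B // g J = L}, f ((J : B) : DyadicI) := ENNReal.tsum_sigma' _
    _ ≤ ∑' L : C, ∑' J : {J : DyadicI // J ∈ B ∧ le J (L : DyadicI)}, f J := by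
        refine Summable.tsum_le_tsum (fun L => ?_) ENNReal.summable ENNReal.summable
        refine Summable.tsum_le_tsum_of_inj
          (fun q : {J : B // g J = L} =>
            (⟨((q.1 : B) : DyadicI), (q.1).2, by
              have h2 : ((g q.1 : C) : DyadicI) = (L : DyadicI) := by rw [q.2]
              exact h2 ▸ hgle q.1⟩ :
              {J : DyadicI // J ∈ B ∧ le J (L : DyadicI)}))
          ?_ (fun _ _ => zero_le) (fun q => le_rfl) ENNReal.summable ENNReal.summable
        intro a b hab
        simp only [Subtype.mk.injEq] at hab
        exact Subtype.ext (Subtype.ext hab)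

/-- Lemma B: sum over elements of `B` under `L` is at most `carlesonP r B * len L ^ r`. -/
lemma sum_under_le {r : ℝ} (hr : 1 ≤ r) (B : Set DyadicI) (L : DyadicI) :
    ∑' J : {J : DyadicI // J ∈ B ∧ le J L}, len (J : DyadicI) ^ r
      ≤ carlesonP r B * len L ^ r := by
  set B2 : Set DyadicI := {J | J ∈ B ∧ le J L} with hB2
  have hcov : ∀ J ∈ B2, ∃ N ∈ maxB B2, le J N := fun J hJ => exists_le_maxB hJ
  have inner : ∀ N : maxB B2,
      ∑' J : {J : DyadicI // J ∈ B2 ∧ le J (N : DyadicI)}, len (J : DyadicI) ^ r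
        ≤ carlesonP r B * len (N : DyadicI) ^ r := by
    intro N
    have hNB : (N : DyadicI) ∈ B := N.2.1.1
    have step1 : ∑' J : {J : DyadicI // J ∈ B2 ∧ le J (N : DyadicI)}, len (J : DyadicI) ^ r
        ≤ ∑' J : {J : DyadicI // J ∈ B ∧ le J (N : DyadicI)}, len (J : DyadicI) ^ r := by
      refine Summable.tsum_le_tsum_of_inj
        (fun q => ⟨(q : DyadicI), q.2.1.1, q.2.2⟩) ?_ (fun _ _ => zero_le)
        (fun q => le_rfl) ENNReal.summable ENNReal.summable
      intro a b hab
      simp only [Subtype.mk.injEq] at hab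
      exact Subtype.ext hab
    have step2 : (len (N : DyadicI) ^ r)⁻¹ *
        ∑' J : {J : DyadicI // J ∈ B ∧ le J (N : DyadicI)}, len (J : DyadicI) ^ r
        ≤ carlesonP r B :=
      le_iSup (fun I : B => (len (I : DyadicI) ^ r)⁻¹ *
        ∑' J : {J : DyadicI // J ∈ B ∧ le J (I : DyadicI)}, len (J : DyadicI) ^ r)
        (⟨(N : DyadicI), hNB⟩ : B)
    rw [ENNReal.inv_mul_le_iff (len_rpow_ne_zero _ _) (len_rpow_ne_top _ _)] at step2
    refine step1.trans (step2.trans ?_)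
    rw [mul_comm]
  calc ∑' J : {J : DyadicI // J ∈ B ∧ le J L}, len (J : DyadicI) ^ r
      = ∑' J : B2, len (J : DyadicI) ^ r := rfl
    _ ≤ ∑' N : maxB B2, ∑' J : {J : DyadicI // J ∈ B2 ∧ le J (N : DyadicI)},
          len (J : DyadicI) ^ r := tsum_le_of_cover (fun J => len J ^ r) hcov
    _ ≤ ∑' N : maxB B2, carlesonP r B * len (N : DyadicI) ^ r :=
        Summable.tsum_le_tsum inner ENNReal.summable ENNReal.summable
    _ = carlesonP r B * ∑' N : maxB B2, len (N : DyadicI) ^ r := ENNReal.tsum_mul_left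
    _ ≤ carlesonP r B * len L ^ r := by
        refine mul_le_mul_right (disjoint_sum_le hr (fun N hN => hN.1.2) ?_) _
        intro N1 h1 N2 h2 hne
        exact maxB_disjoint h1 h2 hne

end DyadicI
/-- the maximal intervals of the "stopped" collection `S(I)` satisfy the
`Λ_{(1/p-1)}` size estimate `∑ (|J|/|I|)^r ≤ M/K`. -/
theorem stopped_part_estimate_lipschitz (p : ℝ) (hp0 : 0 < p) (hp1 : p ≤ 1)
    (r : ℝ) (hr : r = 2 * (1 / p - 1 / 2))
    (π : Equiv.Perm DyadicI) (M : ℝ≥0∞)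
    (hπ : ∀ B : Set DyadicI, carlesonP r (π '' B) ≤ M * carlesonP r B)
    (I : DyadicI) (DI : Set DyadicI) (hDI : ∀ J ∈ DI, le J I)
    (K : ℝ≥0∞) (hK : 0 < K)
    (T : ℝ≥0∞) (hT : T = ∑' L : maxB (π '' DI), len (L : DyadicI) ^ r)
    (S : Set DyadicI)
    (hS : S = {J ∈ DI | K * (len J ^ r / len I ^ r) ≤ len (π J) ^ r / T}) :
    (len I ^ r)⁻¹ * ∑' J : maxB S, len (J : DyadicI) ^ r ≤ M / K := by
  have hrr : 1 ≤ r := by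
    have h1p : 1 ≤ 1 / p := by rw [le_div_iff₀ hp0]; linarith
    rw [hr]; linarith
  rcases Set.eq_empty_or_nonempty (maxB S) with hemp | ⟨J0, hJ0⟩
  · rw [hemp]
    simp
  -- basic facts
  have hJ0S : J0 ∈ S := hJ0.1
  have hSDI : S ⊆ DI := by rw [hS]; exact fun J hJ => hJ.1
  have hcond : ∀ J ∈ S, K * (len J ^ r / len I ^ r) ≤ len (π J) ^ r / T := by
    rw [hS]; exact fun J hJ => hJ.2
  -- T is nonzero
  obtain ⟨L0, hL0max, -⟩ := exists_le_maxB (Set.mem_image_of_mem π (hSDI hJ0S))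
  have hT0 : T ≠ 0 := by
    rw [hT]
    intro h0
    have := ENNReal.le_tsum (f := fun L : maxB (π '' DI) => len (L : DyadicI) ^ r)
      ⟨L0, hL0max⟩
    rw [h0] at this
    exact len_rpow_ne_zero L0 r (le_antisymm this zero_le)
  -- K is finite
  have hKtop : K ≠ ⊤ := by
    intro htop
    have h1 := hcond J0 hJ0S
    have hq0 : len J0 ^ r / len I ^ r ≠ 0 := by
      intro h
      rcases ENNReal.div_eq_zero_iff.1 h with h' | h'
      · exact len_rpow_ne_zero _ _ h'
      · exact len_rpow_ne_top _ _ h'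
    rw [htop, ENNReal.top_mul hq0] at h1
    have : len (π J0) ^ r / T = ⊤ := top_le_iff.1 h1
    rw [ENNReal.div_eq_top] at this
    rcases this with ⟨-, h⟩ | ⟨h, -⟩
    · exact hT0 h
    · exact len_rpow_ne_top _ _ h
  -- The key estimate: ∑ len (π J) ^ r over maxB S is at most M * T
  have hcc : carlesonP r (maxB S) ≤ 1 := by
    refine iSup_le fun I0 => ?_
    have huniq : ∀ a : {J : DyadicI // J ∈ maxB S ∧ le J (I0 : DyadicI)},
        (a : DyadicI) = (I0 : DyadicI) := by
      intro a
      exact (a.2.1.2 (I0 : DyadicI) I0.2.1 a.2.2).symm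
    have a0 : {J : DyadicI // J ∈ maxB S ∧ le J (I0 : DyadicI)} :=
      ⟨(I0 : DyadicI), I0.2, le_rfl' _⟩
    haveI : Subsingleton {J : DyadicI // J ∈ maxB S ∧ le J (I0 : DyadicI)} :=
      ⟨fun a b => Subtype.ext ((huniq a).trans (huniq b).symm)⟩
    have hsum : ∑' J : {J : DyadicI // J ∈ maxB S ∧ le J (I0 : DyadicI)},
        len (J : DyadicI) ^ r = len (I0 : DyadicI) ^ r := by
      rw [tsum_eq_single a0 (fun b hb => (hb (Subsingleton.elim b a0)).elim), huniq a0]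
    rw [hsum, mul_comm]
    exact ENNReal.mul_inv_le_one _
  have hccπ : carlesonP r (π '' maxB S) ≤ M := by
    refine (hπ (maxB S)).trans ?_
    calc M * carlesonP r (maxB S) ≤ M * 1 := mul_le_mul_right hcc M
      _ = M := mul_one M
  have hreindex : ∑' J : maxB S, len (π (J : DyadicI)) ^ r
      = ∑' J' : π '' maxB S, len (J' : DyadicI) ^ r := by
    rw [← (Equiv.Set.image π (maxB S) π.injective).tsum_eq
      (fun J' : π '' maxB S => len (J' : DyadicI) ^ r)]
    rfl
  have hkey : ∑' J : maxB S, len (π (J : DyadicI)) ^ r ≤ M * T := by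
    rw [hreindex]
    have hcov : ∀ J' ∈ π '' maxB S, ∃ L ∈ maxB (π '' DI), le J' L := by
      rintro J' ⟨J, hJ, rfl⟩
      exact exists_le_maxB (Set.mem_image_of_mem π (hSDI hJ.1))
    calc ∑' J' : π '' maxB S, len (J' : DyadicI) ^ r
        ≤ ∑' L : maxB (π '' DI),
            ∑' J' : {J' : DyadicI // J' ∈ π '' maxB S ∧ le J' (L : DyadicI)},
              len (J' : DyadicI) ^ r := tsum_le_of_cover (fun J' => len J' ^ r) hcov
      _ ≤ ∑' L : maxB (π '' DI), carlesonP r (π '' maxB S) * len (L : DyadicI) ^ r :=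
          Summable.tsum_le_tsum (fun L => sum_under_le hrr _ _) ENNReal.summable ENNReal.summable
      _ = carlesonP r (π '' maxB S) * ∑' L : maxB (π '' DI), len (L : DyadicI) ^ r :=
          ENNReal.tsum_mul_left
      _ ≤ M * T := by rw [hT]; exact mul_le_mul_left hccπ _
  -- assemble
  rw [ENNReal.le_div_iff_mul_le (Or.inl hK.ne') (Or.inl hKtop), mul_comm]
  calc K * ((len I ^ r)⁻¹ * ∑' J : maxB S, len (J : DyadicI) ^ r)
      = (K * (len I ^ r)⁻¹) * ∑' J : maxB S, len (J : DyadicI) ^ r := by ring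
    _ = ∑' J : maxB S, (K * (len I ^ r)⁻¹) * len (J : DyadicI) ^ r :=
        ENNReal.tsum_mul_left.symm
    _ = ∑' J : maxB S, K * (len (J : DyadicI) ^ r / len I ^ r) := by
        refine tsum_congr fun J => ?_
        rw [div_eq_mul_inv]; ring
    _ ≤ ∑' J : maxB S, len (π (J : DyadicI)) ^ r / T :=
        Summable.tsum_le_tsum (fun J => hcond _ J.2.1) ENNReal.summable ENNReal.summable
    _ = (∑' J : maxB S, len (π (J : DyadicI)) ^ r) / T := by
        simp only [div_eq_mul_inv]
        exact ENNReal.tsum_mul_right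
    _ ≤ (M * T) / T := ENNReal.div_le_div_right hkey T
    _ = M * (T / T) := by rw [mul_div_assoc]
    _ ≤ M * 1 := mul_le_mul_right ENNReal.div_self_le_one M
    _ = M := mul_one M
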